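/- arXiv:2109.04315 — 4 statements merged into one kernel-verified Lean document; each statement's English description precedes it below -/
import Mathlib

section
/- Let (Sₙ) be a random walk with i.i.d. increments, T = inf{ i ≥ 0 : Sᵢ > 0 } the first hitting time of the positive half-line, and call n a weak descending record time if Sₙ = min_{0 ≤ k ≤ n} S_k. Then for every n ≥ 0, P(T > n) = P(n is a weak descending record time). -/
open MeasureTheory ProbabilityTheory Finset

/-! Reversing the first `n` increments turns the partial sums `S_i` into `S_n - S_{n-i}`, so `n` is a
weak descending record time of the walk exactly when the reversed walk stays `≤ 0` up to time `n`.
Since the increments are i.i.d., the reversed sequence has the same joint law as the original. -/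

namespace ProbabilityTheory

theorem iIndepFun.identDistrib_precomp {ι Ω β : Type*} [MeasurableSpace Ω] [MeasurableSpace β]
    {μ : Measure Ω} {X : ι → Ω → β} (hmeas : ∀ i, Measurable (X i)) (hindep : iIndepFun X μ)
    {σ : ι → ι} (hσ : σ.Injective) (hident : ∀ i, IdentDistrib (X (σ i)) (X i) μ μ) :
    IdentDistrib (fun ω i ↦ X i ω) (fun ω i ↦ X (σ i) ω) μ μ where
  aemeasurable_fst := (measurable_pi_lambda _ hmeas).aemeasurable
  aemeasurable_snd := (measurable_pi_lambda _ fun i ↦ hmeas (σ i)).aemeasurable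
  map_eq := by
    rw [hindep.map_fun_eq_infinitePi_map hmeas,
      (hindep.precomp hσ).map_fun_eq_infinitePi_map fun i ↦ hmeas (σ i)]
    simp only [fun i ↦ (hident i).map_eq]

end ProbabilityTheory

def Nat.reflectBelow (n j : ℕ) : ℕ := if j < n then n - 1 - j else j

theorem Nat.reflectBelow_involutive (n : ℕ) : Function.Involutive (Nat.reflectBelow n) := by
  intro j
  unfold Nat.reflectBelow
  split_ifs <;> omega

theorem Finset.sum_range_reflect_eq_sub {M : Type*} [AddCommGroup M] (x : ℕ → M) {i n : ℕ}
    (hi : i ≤ n) :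
    ∑ j ∈ range i, x (n - 1 - j) = ∑ j ∈ range n, x j - ∑ j ∈ range (n - i), x j := by
  obtain ⟨m, rfl⟩ := Nat.exists_eq_add_of_le' hi
  rw [Nat.add_sub_cancel, sum_range_add, add_sub_cancel_left, ← sum_range_reflect]
  refine sum_congr rfl fun j hj ↦ ?_
  rw [mem_range] at hj
  congr 1
  omega

theorem forall_sum_range_le_iff_reflectBelow {M : Type*} [AddCommGroup M] [PartialOrder M]
    [IsOrderedAddMonoid M] (x : ℕ → M) (n : ℕ) :
    (∀ k ≤ n, ∑ j ∈ range n, x j ≤ ∑ j ∈ range k, x j) ↔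
      ∀ i ≤ n, ∑ j ∈ range i, x (Nat.reflectBelow n j) ≤ 0 := by
  have hsum : ∀ i ≤ n, ∑ j ∈ range i, x (Nat.reflectBelow n j)
      = ∑ j ∈ range n, x j - ∑ j ∈ range (n - i), x j := fun i hi ↦ by
    rw [← sum_range_reflect_eq_sub x hi]
    exact sum_congr rfl fun j hj ↦ by
      rw [Nat.reflectBelow, if_pos (by rw [mem_range] at hj; omega)]
  constructor
  · intro h i hi
    rw [hsum i hi, sub_nonpos]
    exact h _ (Nat.sub_le n i)
  · intro h k hk
    have := h (n - k) (Nat.sub_le n k)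
    rwa [hsum _ (Nat.sub_le n k), sub_nonpos, Nat.sub_sub_self hk] at this

theorem measurableSet_forall_sum_range_nonpos (n : ℕ) :
    MeasurableSet {x : ℕ → ℝ | ∀ i ≤ n, ∑ j ∈ range i, x j ≤ 0} := by
  simp only [Set.ofPred_forall]
  exact .iInter fun i ↦ .iInter fun _ ↦ measurableSet_le (by fun_prop) measurable_const

theorem stmt3_general {Ω : Type*} [MeasurableSpace Ω] {μ : Measure Ω}
    (X : ℕ → Ω → ℝ) (hmeas : ∀ i, Measurable (X i))
    (hindep : iIndepFun X μ)
    (hident : ∀ i, IdentDistrib (X i) (X 0) μ μ) (n : ℕ) :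
    μ {ω | ∀ i ≤ n, (∑ j ∈ Finset.range i, X j ω) ≤ 0}
      = μ {ω | ∀ k ≤ n, (∑ j ∈ Finset.range n, X j ω) ≤ ∑ j ∈ Finset.range k, X j ω} := by
  have hlaw := hindep.identDistrib_precomp hmeas (Nat.reflectBelow_involutive n).injective
    fun i ↦ (hident _).trans (hident i).symm
  have hrecord : {ω | ∀ k ≤ n, (∑ j ∈ range n, X j ω) ≤ ∑ j ∈ range k, X j ω}
      = (fun ω j ↦ X (Nat.reflectBelow n j) ω) ⁻¹' {x | ∀ i ≤ n, ∑ j ∈ range i, x j ≤ 0} := by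
    ext ω
    exact forall_sum_range_le_iff_reflectBelow (fun j ↦ X j ω) n
  rw [hrecord]
  exact hlaw.measure_mem_eq (measurableSet_forall_sum_range_nonpos n)

/-- With T = inf{i ≥ 0 : Sᵢ > 0}, for every n we have
P(T > n) = P(n is a weak descending record time).  The event {T > n} is
{Sᵢ ≤ 0 for all i ≤ n}, and n is a weak descending record time iff Sₙ ≤ S_k for all k ≤ n. -/
theorem stmt3 {Ω : Type*} [MeasurableSpace Ω] {μ : Measure Ω} [IsProbabilityMeasure μ]
    (X : ℕ → Ω → ℝ) (hmeas : ∀ i, Measurable (X i))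
    (hindep : iIndepFun X μ)
    (hident : ∀ i, IdentDistrib (X i) (X 0) μ μ) (n : ℕ) :
    μ {ω | ∀ i ≤ n, (∑ j ∈ Finset.range i, X j ω) ≤ 0}
      = μ {ω | ∀ k ≤ n, (∑ j ∈ Finset.range n, X j ω) ≤ ∑ j ∈ Finset.range k, X j ω} :=
  stmt3_general X hmeas hindep hident n
end

section
/- Let (Sₙ) be a random walk with i.i.d. increments bounded above by a constant C and with strictly positive mean μ = E[X] > 0. Let T = inf{i ≥ 0 : Sᵢ > 0}. Then E[T] ≤ C/μ; in particular E[T] < ∞. -/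
/-!
Let `T` be the first time the walk `Sᵢ = X₀ + ⋯ + X_{i-1}` is positive. The event
`{T > i}` depends only on `X₀, …, X_{i-1}`, so independence gives
`E[Xᵢ; T > i] = E[X] P(T > i)`. Summing over `i < n` yields `E[S_{n∧T}] = E[X] E[n ∧ T]`
(optional stopping for `Sₙ - n E[X]`), while `S_{n∧T} ≤ C` since the walk is nonpositive
before `T` and overshoots `0` by at most one increment. Letting `n → ∞`,
`E[T] = ∑ᵢ P(T > i) ≤ C / E[X]`.
-/

open MeasureTheory ProbabilityTheory Finset
open scoped ENNReal

theorem iInf_natCast_eq_tsum_indicator (p : ℕ → Prop) :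
    (⨅ i ∈ {i | p i}, (i : ℝ≥0∞)) = ∑' i, {i | ∀ j ≤ i, ¬ p j}.indicator 1 i := by
  classical
  rw [← _root_.tsum_subtype]
  simp only [Pi.one_apply]
  rw [ENNReal.tsum_set_one]
  by_cases h : ∃ i, p i
  · have : {i | ∀ j ≤ i, ¬ p j} = {i | i < Nat.find h} := by ext; simp
    rw [this, Set.Nat.encard_range, ENat.toENNReal_coe]
    exact le_antisymm (biInf_le _ (Nat.find_spec h))
      (le_iInf₂ fun i hi => by exact_mod_cast Nat.find_min' h hi)
  · simp only [not_exists] at h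
    simp [h]

-- The left-hand side is the walk stopped at the first time it is positive.
theorem sum_range_ite_nonpos_le (x : ℕ → ℝ) {C : ℝ} (hC : 0 ≤ C) (hx : ∀ j, x j ≤ C)
    (n : ℕ) :
    ∑ i ∈ range n, (if ∀ j ≤ i, ∑ l ∈ range j, x l ≤ 0 then x i else 0) ≤ C := by
  induction n with
  | zero => simpa using hC
  | succ n ih =>
    rw [sum_range_succ]
    split_ifs with hn
    · have hall : ∑ i ∈ range n, (if ∀ j ≤ i, ∑ l ∈ range j, x l ≤ 0 then x i else 0)
          = ∑ i ∈ range n, x i :=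
        sum_congr rfl fun i hi => if_pos fun j hj => hn j (hj.trans (mem_range.1 hi).le)
      linarith [hn n le_rfl, hx n]
    · simpa using ih

section RandomWalk

variable {Ω : Type*} {X : ℕ → Ω → ℝ}

-- The event `{T > i}`.
def nonposUpTo (X : ℕ → Ω → ℝ) (i : ℕ) : Set Ω :=
  {ω | ∀ j ≤ i, ∑ l ∈ range j, X l ω ≤ 0}

theorem measurableSet_nonposUpTo {m : MeasurableSpace Ω} {i : ℕ}
    (hX : ∀ k < i, Measurable[m] (X k)) : MeasurableSet[m] (nonposUpTo X i) := by
  simp only [nonposUpTo, Set.ofPred_forall]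
  refine MeasurableSet.iInter fun j => MeasurableSet.iInter fun hj =>
    measurableSet_le ?_ measurable_const
  exact Finset.measurable_sum _ fun l hl => hX l ((mem_range.1 hl).trans_le hj)

variable [MeasurableSpace Ω] {μ : Measure Ω}

theorem setIntegral_nonposUpTo (hmeas : ∀ i, Measurable (X i)) (hindep : iIndepFun X μ)
    (i : ℕ) :
    ∫ ω in nonposUpTo X i, X i ω ∂μ = μ.real (nonposUpTo X i) * ∫ ω, X i ω ∂μ := by
  set past := ⨆ k ∈ {k | k < i}, MeasurableSpace.comap (X k) inferInstance
  have hpast : Indep past (MeasurableSpace.comap (X i) inferInstance) μ := by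
    simpa [past] using indep_iSup_of_disjoint (fun k => (hmeas k).comap_le) hindep
      (S := {k | k < i}) (T := {i}) (by simp)
  have hA : MeasurableSet[past] (nonposUpTo X i) :=
    measurableSet_nonposUpTo fun k hk => Measurable.of_comap_le <|
      le_biSup (fun k => MeasurableSpace.comap (X k) inferInstance) (show k ∈ {k | k < i} from hk)
  exact hpast.setIntegral_eq_mul (f := id) (iSup₂_le fun k _ => (hmeas k).comap_le)
    (hmeas i).aemeasurable hA aestronglyMeasurable_id

theorem lintegral_iInf_pos_eq_tsum_measure (hmeas : ∀ i, Measurable (X i)) :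
    ∫⁻ ω, ⨅ i ∈ {i : ℕ | 0 < ∑ j ∈ range i, X j ω}, (i : ℝ≥0∞) ∂μ
      = ∑' i, μ (nonposUpTo X i) := by
  have hA : ∀ i, MeasurableSet (nonposUpTo X i) :=
    fun i => measurableSet_nonposUpTo fun k _ => hmeas k
  have hpt : ∀ ω, ⨅ i ∈ {i : ℕ | 0 < ∑ j ∈ range i, X j ω}, (i : ℝ≥0∞)
      = ∑' i, (nonposUpTo X i).indicator 1 ω := by
    intro ω
    rw [iInf_natCast_eq_tsum_indicator]
    simp only [Set.indicator_apply, nonposUpTo, not_lt, Set.mem_ofPred_eq, Pi.one_apply]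
  rw [lintegral_congr hpt,
    lintegral_tsum fun i => (measurable_one.indicator (hA i)).aemeasurable]
  simp_rw [lintegral_indicator_one (hA _)]

theorem sum_measureReal_nonposUpTo_mul_le [IsProbabilityMeasure μ]
    (hmeas : ∀ i, Measurable (X i)) (hindep : iIndepFun X μ)
    (hident : ∀ i, IdentDistrib (X i) (X 0) μ μ) (hint : Integrable (X 0) μ)
    {C : ℝ} (hC : 0 ≤ C) (hbdd : ∀ i, ∀ᵐ ω ∂μ, X i ω ≤ C) (n : ℕ) :
    (∑ i ∈ range n, μ.real (nonposUpTo X i)) * ∫ ω, X 0 ω ∂μ ≤ C := by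
  have hint' : ∀ i, Integrable ((nonposUpTo X i).indicator (X i)) μ := fun i =>
    ((hident i).integrable_iff.2 hint).indicator (measurableSet_nonposUpTo fun k _ => hmeas k)
  calc (∑ i ∈ range n, μ.real (nonposUpTo X i)) * ∫ ω, X 0 ω ∂μ
      = ∑ i ∈ range n, ∫ ω in nonposUpTo X i, X i ω ∂μ := by
        rw [sum_mul]
        refine sum_congr rfl fun i _ => ?_
        rw [setIntegral_nonposUpTo hmeas hindep, (hident i).integral_eq]
    _ = ∫ ω, ∑ i ∈ range n, (nonposUpTo X i).indicator (X i) ω ∂μ := by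
        rw [integral_finsetSum _ fun i _ => hint' i]
        simp_rw [integral_indicator (measurableSet_nonposUpTo fun k _ => hmeas k)]
    _ ≤ ∫ _, C ∂μ := by
        refine integral_mono_ae (integrable_finsetSum _ fun i _ => hint' i)
          (integrable_const C) ?_
        filter_upwards [ae_all_iff.2 hbdd] with ω hω
        simpa only [Set.indicator_apply, nonposUpTo, Set.mem_ofPred_eq]
          using sum_range_ite_nonpos_le (fun j => X j ω) hC hω n
    _ = C := by simp

end RandomWalk

/-- If the i.i.d. increments are bounded above by C and have mean μ₀ = E[X] > 0, then
E[T] ≤ C / μ₀ where T = inf{i ≥ 0 : Sᵢ > 0}; in particular E[T] < ∞. -/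
theorem stmt5 {Ω : Type*} [MeasurableSpace Ω] {μ : Measure Ω} [IsProbabilityMeasure μ]
    (X : ℕ → Ω → ℝ) (hmeas : ∀ i, Measurable (X i))
    (hindep : iIndepFun X μ)
    (hident : ∀ i, IdentDistrib (X i) (X 0) μ μ)
    (hint : Integrable (X 0) μ) (C : ℝ) (hC : 0 < C)
    (hbdd : ∀ i, ∀ᵐ ω ∂μ, X i ω ≤ C) (hpos : 0 < ∫ ω, X 0 ω ∂μ) :
    (∫⁻ ω, ⨅ i ∈ {i : ℕ | 0 < ∑ j ∈ Finset.range i, X j ω}, (i : ℝ≥0∞) ∂μ)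
        ≤ ENNReal.ofReal (C / ∫ ω, X 0 ω ∂μ) ∧
      (∫⁻ ω, ⨅ i ∈ {i : ℕ | 0 < ∑ j ∈ Finset.range i, X j ω}, (i : ℝ≥0∞) ∂μ) < ⊤ := by
  have hbound : ∫⁻ ω, ⨅ i ∈ {i : ℕ | 0 < ∑ j ∈ Finset.range i, X j ω}, (i : ℝ≥0∞) ∂μ
      ≤ ENNReal.ofReal (C / ∫ ω, X 0 ω ∂μ) := by
    rw [lintegral_iInf_pos_eq_tsum_measure hmeas]
    refine ENNReal.tsum_le_of_sum_range_le fun n => ?_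
    rw [ENNReal.le_ofReal_iff_toReal_le (ENNReal.sum_ne_top.2 fun i _ => measure_ne_top μ _)
      (by positivity), ENNReal.toReal_sum fun i _ => measure_ne_top μ _, le_div_iff₀ hpos]
    exact sum_measureReal_nonposUpTo_mul_le hmeas hindep hident hint hC.le hbdd n
  exact ⟨hbound, hbound.trans_lt ENNReal.ofReal_lt_top⟩
end

section
/- If E[T] < ∞ where T is the first hitting time of (0,∞) by a random walk with i.i.d. increments, then almost surely the walk has only finitely many weak descending record times, and hence is bounded below almost surely. -/
open MeasureTheory ProbabilityTheory
open scoped ENNReal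

/-! Reversing the first `n` increments maps the event "`n` is a weak descending record time" onto
`{Sᵢ ≤ 0 for all i ≤ n} = {T > n}`, and an i.i.d. sequence is invariant in law under this
reversal. Hence `∑ₙ P(n is a record time) = ∑ₙ P(T > n) ≤ E[T] + 1 < ∞`, so by Borel–Cantelli
a.s. only finitely many record times occur. The minimum of `S₀, …, Sₙ` is attained at a record
time, so the walk is bounded below by the smallest value it takes at a record time. -/

namespace RandomWalk

section Exchangeable

variable {Ω β : Type*} [MeasurableSpace Ω] [MeasurableSpace β] {μ : Measure Ω} {X : ℕ → Ω → β}

theorem map_fun_eq_infinitePi_of_iid (hmeas : ∀ i, Measurable (X i)) (hindep : iIndepFun X μ)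
    (hident : ∀ i, IdentDistrib (X i) (X 0) μ μ) :
    μ.map (fun ω i ↦ X i ω) = Measure.infinitePi (fun _ ↦ μ.map (X 0)) := by
  rw [hindep.map_fun_eq_infinitePi_map hmeas]
  simp_rw [fun i ↦ (hident i).map_eq]

theorem identDistrib_comp_of_injective (hmeas : ∀ i, Measurable (X i))
    (hindep : iIndepFun X μ) (hident : ∀ i, IdentDistrib (X i) (X 0) μ μ)
    {σ : ℕ → ℕ} (hσ : σ.Injective) :
    IdentDistrib (fun ω i ↦ X (σ i) ω) (fun ω i ↦ X i ω) μ μ where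
  aemeasurable_fst := (measurable_pi_lambda _ fun i ↦ hmeas (σ i)).aemeasurable
  aemeasurable_snd := (measurable_pi_lambda _ hmeas).aemeasurable
  map_eq := by
    rw [map_fun_eq_infinitePi_of_iid hmeas hindep hident,
      map_fun_eq_infinitePi_of_iid (X := fun i ↦ X (σ i)) (fun i ↦ hmeas (σ i))
        (hindep.precomp hσ) fun i ↦ (hident (σ i)).trans (hident (σ 0)).symm,
      (hident (σ 0)).map_eq]

end Exchangeable

section Records

def weakDescendingRecords {α : Type*} [Preorder α] (s : ℕ → α) : Set ℕ :=
  {n | ∀ k ≤ n, s n ≤ s k}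

theorem bddBelow_range_of_finite_weakDescendingRecords {α : Type*} [LinearOrder α] {s : ℕ → α}
    (hs : (weakDescendingRecords s).Finite) : BddBelow (Set.range s) := by
  have : Nonempty α := ⟨s 0⟩
  obtain ⟨b, hb⟩ := (hs.image s).bddBelow
  refine ⟨b, Set.forall_mem_range.2 fun n ↦ ?_⟩
  obtain ⟨r, hrn, hmin⟩ := Finset.exists_min_image (Finset.Iic n) s ⟨n, (Finset.mem_Iic.2 le_rfl)⟩
  have hr : r ∈ weakDescendingRecords s := fun k hk ↦
    hmin k (Finset.mem_Iic.2 (hk.trans (Finset.mem_Iic.1 hrn)))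
  exact (hb ⟨r, hr, rfl⟩).trans (hmin n (Finset.mem_Iic.2 le_rfl))

def revPrefix (n j : ℕ) : ℕ := if j < n then n - 1 - j else j

theorem revPrefix_injective (n : ℕ) : (revPrefix n).Injective := by
  intro a b h
  unfold revPrefix at h
  split_ifs at h <;> omega

theorem sum_range_revPrefix {M : Type*} [AddCommGroup M] (x : ℕ → M) {n i : ℕ} (hi : i ≤ n) :
    ∑ j ∈ Finset.range i, x (revPrefix n j)
      = ∑ j ∈ Finset.range n, x j - ∑ j ∈ Finset.range (n - i), x j := by
  induction i with
  | zero => simp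
  | succ i ih =>
    rw [Finset.sum_range_succ, ih (by omega), show n - i = n - (i + 1) + 1 by omega,
      Finset.sum_range_succ, revPrefix, if_pos (by omega), show n - 1 - i = n - (i + 1) by omega]
    abel

theorem mem_weakDescendingRecords_iff {α : Type*} [AddCommGroup α] [PartialOrder α]
    [IsOrderedAddMonoid α] (x : ℕ → α) (n : ℕ) :
    n ∈ weakDescendingRecords (fun m ↦ ∑ j ∈ Finset.range m, x j)
      ↔ ∀ i ≤ n, ∑ j ∈ Finset.range i, x (revPrefix n j) ≤ 0 := by
  refine ⟨fun h i hi ↦ ?_, fun h k hk ↦ ?_⟩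
  · rw [sum_range_revPrefix x hi, sub_nonpos]
    exact h _ (Nat.sub_le n i)
  · have := h (n - k) (Nat.sub_le n k)
    rwa [sum_range_revPrefix x (Nat.sub_le n k), Nat.sub_sub_self hk, sub_nonpos] at this

theorem measure_mem_weakDescendingRecords_eq {Ω : Type*} [MeasurableSpace Ω] {μ : Measure Ω}
    {X : ℕ → Ω → ℝ} (hmeas : ∀ i, Measurable (X i)) (hindep : iIndepFun X μ)
    (hident : ∀ i, IdentDistrib (X i) (X 0) μ μ) (n : ℕ) :
    μ {ω | n ∈ weakDescendingRecords (fun m ↦ ∑ j ∈ Finset.range m, X j ω)}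
      = μ {ω | ∀ i ≤ n, ∑ j ∈ Finset.range i, X j ω ≤ 0} := by
  have hB : MeasurableSet {x : ℕ → ℝ | ∀ i ≤ n, ∑ j ∈ Finset.range i, x j ≤ 0} := by
    measurability
  calc μ {ω | n ∈ weakDescendingRecords (fun m ↦ ∑ j ∈ Finset.range m, X j ω)}
      = μ {ω | ∀ i ≤ n, ∑ j ∈ Finset.range i, X (revPrefix n j) ω ≤ 0} := by
        simp_rw [mem_weakDescendingRecords_iff]
    _ = μ {ω | ∀ i ≤ n, ∑ j ∈ Finset.range i, X j ω ≤ 0} :=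
        (identDistrib_comp_of_injective hmeas hindep hident (revPrefix_injective n)).measure_mem_eq
          hB

end Records

section FirstPassage

theorem natCast_lt_iInf_iff (p : ℕ → Prop) (n : ℕ) :
    (n : ℝ≥0∞) < ⨅ i ∈ {i | p i}, (i : ℝ≥0∞) ↔ ∀ i ≤ n, ¬ p i := by
  constructor
  · intro h i hi hp
    exact (h.trans_le ((iInf₂_le i hp).trans (Nat.cast_le.2 hi))).false
  · intro h
    calc (n : ℝ≥0∞) < (n + 1 : ℕ) := Nat.cast_lt.2 n.lt_succ_self
      _ ≤ _ := le_iInf₂ fun i hp ↦ Nat.cast_le.2 (by_contra fun hi ↦ h i (by omega) hp)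

theorem measurable_iInf_natCast {Ω : Type*} [MeasurableSpace Ω] {p : ℕ → Ω → Prop}
    (hp : ∀ i, MeasurableSet {ω | p i ω}) :
    Measurable fun ω ↦ ⨅ i ∈ {i | p i ω}, (i : ℝ≥0∞) := by
  classical
  refine Measurable.iInf fun i ↦ ?_
  simp only [Set.mem_ofPred_eq, iInf_eq_if]
  exact Measurable.ite (hp i) measurable_const measurable_const

theorem tsum_ite_natCast_lt_le (c : ℝ≥0∞) :
    ∑' n : ℕ, (if (n : ℝ≥0∞) < c then 1 else 0) ≤ c + 1 := by
  rcases eq_or_ne c ⊤ with rfl | hc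
  · simp
  have hlt (n : ℕ) : (n : ℝ≥0∞) < c ↔ n < ⌈c.toReal⌉₊ := by
    rw [Nat.lt_ceil, ← ENNReal.toReal_natCast, ENNReal.toReal_lt_toReal (by simp) hc]
  simp_rw [hlt]
  rw [tsum_eq_sum (s := Finset.range ⌈c.toReal⌉₊) (by simp),
    Finset.sum_ite_of_true fun n hn ↦ Finset.mem_range.1 hn]
  simp only [Finset.sum_const, Finset.card_range, nsmul_eq_mul, mul_one]
  calc (⌈c.toReal⌉₊ : ℝ≥0∞) = ENNReal.ofReal ⌈c.toReal⌉₊ := (ENNReal.ofReal_natCast _).symm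
    _ ≤ ENNReal.ofReal (c.toReal + 1) :=
        ENNReal.ofReal_le_ofReal (Nat.ceil_lt_add_one ENNReal.toReal_nonneg).le
    _ = c + 1 := by
        rw [ENNReal.ofReal_add ENNReal.toReal_nonneg zero_le_one, ENNReal.ofReal_toReal hc,
          ENNReal.ofReal_one]

theorem tsum_measure_natCast_lt_le {Ω : Type*} [MeasurableSpace Ω] {μ : Measure Ω}
    [IsProbabilityMeasure μ] {f : Ω → ℝ≥0∞} (hf : Measurable f) :
    ∑' n : ℕ, μ {ω | (n : ℝ≥0∞) < f ω} ≤ ∫⁻ ω, f ω ∂μ + 1 := by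
  have hmeas (n : ℕ) : MeasurableSet {ω | (n : ℝ≥0∞) < f ω} :=
    measurableSet_lt measurable_const hf
  calc ∑' n : ℕ, μ {ω | (n : ℝ≥0∞) < f ω}
      = ∫⁻ ω, ∑' n : ℕ, {ω | (n : ℝ≥0∞) < f ω}.indicator 1 ω ∂μ := by
        rw [lintegral_tsum fun n ↦ (measurable_one.indicator (hmeas n)).aemeasurable]
        simp_rw [lintegral_indicator_one (hmeas _)]
    _ ≤ ∫⁻ ω, (f ω + 1) ∂μ := lintegral_mono fun ω ↦ by
        simpa [Set.indicator_apply] using tsum_ite_natCast_lt_le (f ω)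
    _ = ∫⁻ ω, f ω ∂μ + 1 := by
        rw [lintegral_add_right _ measurable_const, lintegral_const, measure_univ, mul_one]

end FirstPassage

theorem tsum_measure_mem_weakDescendingRecords_le {Ω : Type*} [MeasurableSpace Ω]
    {μ : Measure Ω} [IsProbabilityMeasure μ] {X : ℕ → Ω → ℝ} (hmeas : ∀ i, Measurable (X i))
    (hindep : iIndepFun X μ) (hident : ∀ i, IdentDistrib (X i) (X 0) μ μ) :
    ∑' n : ℕ, μ {ω | n ∈ weakDescendingRecords (fun m ↦ ∑ j ∈ Finset.range m, X j ω)}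
      ≤ ∫⁻ ω, ⨅ i ∈ {i : ℕ | 0 < ∑ j ∈ Finset.range i, X j ω}, (i : ℝ≥0∞) ∂μ + 1 := by
  have hS (i : ℕ) : Measurable fun ω ↦ ∑ j ∈ Finset.range i, X j ω :=
    Finset.measurable_sum _ fun j _ ↦ hmeas j
  calc ∑' n : ℕ, μ {ω | n ∈ weakDescendingRecords (fun m ↦ ∑ j ∈ Finset.range m, X j ω)}
      = ∑' n : ℕ, μ {ω | (n : ℝ≥0∞) <
          ⨅ i ∈ {i : ℕ | 0 < ∑ j ∈ Finset.range i, X j ω}, (i : ℝ≥0∞)} := by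
        simp_rw [measure_mem_weakDescendingRecords_eq hmeas hindep hident, natCast_lt_iInf_iff,
          not_lt]
    _ ≤ _ := tsum_measure_natCast_lt_le
        (measurable_iInf_natCast fun i ↦ measurableSet_lt measurable_const (hS i))

end RandomWalk

open RandomWalk

/-- If E[T] < ∞ where T = inf{i ≥ 0 : Sᵢ > 0}, then a.s. the walk has only finitely many
weak descending record times, and hence is bounded below a.s. -/
theorem stmt8 {Ω : Type*} [MeasurableSpace Ω] {μ : Measure Ω} [IsProbabilityMeasure μ]
    (X : ℕ → Ω → ℝ) (hmeas : ∀ i, Measurable (X i))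
    (hindep : iIndepFun X μ)
    (hident : ∀ i, IdentDistrib (X i) (X 0) μ μ)
    (hT : (∫⁻ ω, ⨅ i ∈ {i : ℕ | 0 < ∑ j ∈ Finset.range i, X j ω}, (i : ℝ≥0∞) ∂μ) < ⊤) :
    (∀ᵐ ω ∂μ, Set.Finite
        {n : ℕ | ∀ k ≤ n, (∑ j ∈ Finset.range n, X j ω) ≤ ∑ j ∈ Finset.range k, X j ω}) ∧
      ∀ᵐ ω ∂μ, BddBelow (Set.range fun n => ∑ i ∈ Finset.range n, X i ω) := by
  have hsum : ∑' n : ℕ,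
      μ {ω | n ∈ weakDescendingRecords (fun m ↦ ∑ j ∈ Finset.range m, X j ω)} ≠ ⊤ :=
    ne_top_of_le_ne_top (ENNReal.add_ne_top.2 ⟨hT.ne, ENNReal.one_ne_top⟩)
      (tsum_measure_mem_weakDescendingRecords_le hmeas hindep hident)
  have hfin := ae_finite_setOfPred_mem hsum
  exact ⟨hfin, hfin.mono fun ω ↦ bddBelow_range_of_finite_weakDescendingRecords⟩
end

section
/- If X₁, X₂, … are i.i.d. with E[X] > 0 and Xᵢ ≤ C a.s. for some C, and Sₙ = X₁ + … + Xₙ, then ∑_{n≥0} P(max_{1≤k≤n} S_k ≤ 0) < ∞. -/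
open MeasureTheory ProbabilityTheory
open scoped Classical in
lemma aux_sum_le (x : ℕ → ℝ) (C : ℝ) (hC : 0 ≤ C) (hx : ∀ i, x i ≤ C) (N : ℕ) :
    ∑ k ∈ Finset.range N,
      (if ∀ j, 1 ≤ j → j ≤ k → ∑ i ∈ Finset.range j, x i ≤ 0 then x k else 0) ≤ C := by
  by_cases h : ∃ k, (1 ≤ k ∧ k ≤ N) ∧ 0 < ∑ i ∈ Finset.range k, x i
  · obtain ⟨T, ⟨⟨hT1, hTN⟩, hTpos⟩, hminT⟩ :
        ∃ T, ((1 ≤ T ∧ T ≤ N) ∧ 0 < ∑ i ∈ Finset.range T, x i) ∧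
          ∀ m < T, ¬ ((1 ≤ m ∧ m ≤ N) ∧ 0 < ∑ i ∈ Finset.range m, x i) :=
      ⟨Nat.find h, Nat.find_spec h, fun m hm => Nat.find_min h hm⟩
    have hmin : ∀ m, 1 ≤ m → m < T → ∑ i ∈ Finset.range m, x i ≤ 0 := by
      intro m hm1 hmT
      by_contra hc
      exact hminT m hmT ⟨⟨hm1, le_trans (le_of_lt hmT) hTN⟩, lt_of_not_ge hc⟩
    have hcond : ∀ k, (∀ j, 1 ≤ j → j ≤ k → ∑ i ∈ Finset.range j, x i ≤ 0) ↔ k < T := by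
      intro k
      constructor
      · intro hk
        by_contra hc
        exact absurd (hk T hT1 (le_of_not_gt hc)) (not_le.2 hTpos)
      · intro hk j hj1 hjk
        exact hmin j hj1 (lt_of_le_of_lt hjk hk)
    have heq : ∑ k ∈ Finset.range N,
        (if ∀ j, 1 ≤ j → j ≤ k → ∑ i ∈ Finset.range j, x i ≤ 0 then x k else 0)
        = ∑ k ∈ Finset.range T, x k := by
      have h1 : ∀ k ∈ Finset.range N,
          (if ∀ j, 1 ≤ j → j ≤ k → ∑ i ∈ Finset.range j, x i ≤ 0 then x k else 0)
          = if k < T then x k else 0 := by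
        intro k _
        by_cases hk : k < T
        · rw [if_pos ((hcond k).2 hk), if_pos hk]
        · rw [if_neg (fun hc => hk ((hcond k).1 hc)), if_neg hk]
      rw [Finset.sum_congr rfl h1]
      rw [← Finset.sum_subset (Finset.range_subset_range.2 hTN)
        (fun k _ hk => if_neg (fun hc => hk (Finset.mem_range.2 hc)))]
      exact Finset.sum_congr rfl fun k hk => if_pos (Finset.mem_range.1 hk)
    rw [heq]
    obtain ⟨T', rfl⟩ : ∃ T', T = T' + 1 := ⟨T - 1, (Nat.succ_pred_eq_of_pos hT1).symm⟩
    rw [Finset.sum_range_succ]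
    have hprev : ∑ i ∈ Finset.range T', x i ≤ 0 := by
      rcases Nat.eq_zero_or_pos T' with h0 | h0
      · simp [h0]
      · exact hmin T' h0 (Nat.lt_succ_self T')
    linarith [hx T']
  · push_neg at h
    have hall : ∀ k, k ≤ N → ∀ j, 1 ≤ j → j ≤ k → ∑ i ∈ Finset.range j, x i ≤ 0 := by
      intro k hk j hj1 hjk
      exact h j ⟨hj1, le_trans hjk hk⟩
    have heq : ∑ k ∈ Finset.range N,
        (if ∀ j, 1 ≤ j → j ≤ k → ∑ i ∈ Finset.range j, x i ≤ 0 then x k else 0)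
        = ∑ k ∈ Finset.range N, x k :=
      Finset.sum_congr rfl fun k hk => if_pos (hall k (le_of_lt (Finset.mem_range.1 hk)))
    rw [heq]
    rcases Nat.eq_zero_or_pos N with h0 | h0
    · simp [h0, hC]
    · exact le_trans (h N ⟨h0, le_refl N⟩) hC
lemma indep_indicator {Ω : Type*} [MeasurableSpace Ω] {μ : Measure Ω}
    (X : ℕ → Ω → ℝ) (hmeas : ∀ i, Measurable (X i))
    (hindep : iIndepFun X μ) (n : ℕ) :
    IndepFun (Set.indicator {ω | ∀ k, 1 ≤ k → k ≤ n →
      (∑ j ∈ Finset.range k, X j ω) ≤ 0} (fun _ => (1:ℝ))) (X n) μ := by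
  have hdisj : Disjoint (Finset.range n) ({n} : Finset ℕ) := by simp
  have h1 := hindep.indepFun_finset (Finset.range n) {n} hdisj hmeas
  set φ : ((i : (Finset.range n : Finset ℕ)) → ℝ) → ℝ :=
    Set.indicator {v : (i : (Finset.range n : Finset ℕ)) → ℝ | ∀ k, 1 ≤ k → k ≤ n →
      (∑ j ∈ Finset.range k, if h : j ∈ Finset.range n then v ⟨j, h⟩ else 0) ≤ 0}
      (fun _ => (1:ℝ)) with hφdef
  set ψ : ((i : ({n} : Finset ℕ)) → ℝ) → ℝ := fun v => v ⟨n, Finset.mem_singleton_self n⟩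
  have hφ : Measurable φ := by
    apply Measurable.indicator measurable_const
    have : ∀ k : ℕ, Measurable (fun v : (i : (Finset.range n : Finset ℕ)) → ℝ =>
        ∑ j ∈ Finset.range k, if h : j ∈ Finset.range n then v ⟨j, h⟩ else 0) := by
      intro k
      apply Finset.measurable_sum
      intro j _
      by_cases h : j ∈ Finset.range n
      · simpa [h] using measurable_pi_apply (⟨j, h⟩ : (Finset.range n : Finset ℕ))
      · simp [h]
    rw [show {v : (i : (Finset.range n : Finset ℕ)) → ℝ | ∀ k, 1 ≤ k → k ≤ n →
        (∑ j ∈ Finset.range k, if h : j ∈ Finset.range n then v ⟨j, h⟩ else 0) ≤ 0}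
      = ⋂ (k : ℕ) (_ : 1 ≤ k) (_ : k ≤ n), {v | (∑ j ∈ Finset.range k,
          if h : j ∈ Finset.range n then v ⟨j, h⟩ else 0) ≤ 0} from by
        ext v; simp [Set.mem_iInter]]
    exact MeasurableSet.iInter fun k => MeasurableSet.iInter fun _ =>
      MeasurableSet.iInter fun _ => measurableSet_le (this k) measurable_const
  have hψ : Measurable ψ := measurable_pi_apply _
  have h2 := h1.comp hφ hψ
  have e1 : (φ ∘ fun a (i : (Finset.range n : Finset ℕ)) => X i a)
      = Set.indicator {ω | ∀ k, 1 ≤ k → k ≤ n →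
        (∑ j ∈ Finset.range k, X j ω) ≤ 0} (fun _ => (1:ℝ)) := by
    funext ω
    simp only [Function.comp_apply, hφdef, Set.indicator_apply, Set.mem_setOf_eq]
    have hiff : (∀ k, 1 ≤ k → k ≤ n →
        (∑ j ∈ Finset.range k, if h : j ∈ Finset.range n then X j ω else 0) ≤ 0)
        ↔ (∀ k, 1 ≤ k → k ≤ n → (∑ j ∈ Finset.range k, X j ω) ≤ 0) := by
      apply forall_congr'; intro k
      apply imp_congr_right; intro _
      apply imp_congr_right; intro hk
      rw [Finset.sum_congr rfl fun j hj => dif_pos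
        (Finset.mem_range.2 (lt_of_lt_of_le (Finset.mem_range.1 hj) hk))]
    rw [if_congr hiff rfl rfl]
  have e2 : (ψ ∘ fun a (i : ({n} : Finset ℕ)) => X i a) = X n := rfl
  rw [e1, e2] at h2
  exact h2

/-- If the Xᵢ are i.i.d. with E[X] > 0 and Xᵢ ≤ C a.s., then
∑ₙ P(max_{1≤k≤n} S_k ≤ 0) < ∞ (this sum is ∑ₙ P(T > n) = E[T]). -/
theorem stmt13 {Ω : Type*} [MeasurableSpace Ω] {μ : Measure Ω} [IsProbabilityMeasure μ]
    (X : ℕ → Ω → ℝ) (hmeas : ∀ i, Measurable (X i))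
    (hindep : iIndepFun X μ)
    (hident : ∀ i, IdentDistrib (X i) (X 0) μ μ)
    (hint : Integrable (X 0) μ) (hpos : 0 < ∫ ω, X 0 ω ∂μ)
    (C : ℝ) (hbdd : ∀ i, ∀ᵐ ω ∂μ, X i ω ≤ C) :
    (∑' n : ℕ, μ {ω | ∀ k, 1 ≤ k → k ≤ n → (∑ j ∈ Finset.range k, X j ω) ≤ 0}) < ⊤ := by
  classical
  set A : ℕ → Set Ω := fun n =>
    {ω | ∀ k, 1 ≤ k → k ≤ n → (∑ j ∈ Finset.range k, X j ω) ≤ 0} with hAdef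
  have hSmeas : ∀ k, Measurable fun ω => ∑ j ∈ Finset.range k, X j ω :=
    fun k => Finset.measurable_sum _ fun j _ => hmeas j
  have hAmeas : ∀ n, MeasurableSet (A n) := by
    intro n
    rw [show A n = ⋂ (k) (_ : 1 ≤ k) (_ : k ≤ n),
        {ω | (∑ j ∈ Finset.range k, X j ω) ≤ 0} from by
      ext ω; simp [hAdef, Set.mem_iInter]]
    exact MeasurableSet.iInter fun k => MeasurableSet.iInter fun _ =>
      MeasurableSet.iInter fun _ => measurableSet_le (hSmeas k) measurable_const
  set m := ∫ ω, X 0 ω ∂μ with hmdef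
  have hintk : ∀ k, Integrable (X k) μ := fun k => (hident k).integrable_iff.mpr hint
  have hintegralk : ∀ k, ∫ ω, X k ω ∂μ = m := fun k => (hident k).integral_eq
  have hmC : m ≤ C := by
    have h := integral_mono_ae hint (integrable_const C) (hbdd 0)
    simpa using h
  have hC : (0:ℝ) < C := lt_of_lt_of_le hpos hmC
  -- Wald step: ∫_{A n} X n = μ(A n) * m
  have key : ∀ n, ∫ ω, Set.indicator (A n) (X n) ω ∂μ = (μ (A n)).toReal * m := by
    intro n
    have hind := indep_indicator X hmeas hindep n
    have hint1 : Integrable (Set.indicator (A n) (fun _ => (1:ℝ))) μ :=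
      (integrable_const (1:ℝ)).indicator (hAmeas n)
    have h := hind.integral_mul_eq_mul_integral hint1.aestronglyMeasurable (hintk n).aestronglyMeasurable
    have e : (Set.indicator (A n) (fun _ => (1:ℝ)) * X n) = Set.indicator (A n) (X n) := by
      funext ω
      by_cases hω : ω ∈ A n <;> simp [Set.indicator_apply, hω]
    rw [e] at h
    rw [show (∫ ω, Set.indicator (A n) (X n) ω ∂μ) = integral μ (Set.indicator (A n) (X n))
        from rfl, h, integral_indicator_const (1:ℝ) (hAmeas n), hintegralk n]
    simp [Measure.real]
  -- partial sums bound
  have hbound : ∀ N : ℕ, (∑ k ∈ Finset.range N, (μ (A k)).toReal) * m ≤ C := by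
    intro N
    have hintInd : ∀ k, Integrable (Set.indicator (A k) (X k)) μ :=
      fun k => (hintk k).indicator (hAmeas k)
    have hsum : ∫ ω, ∑ k ∈ Finset.range N, Set.indicator (A k) (X k) ω ∂μ
        = ∑ k ∈ Finset.range N, (μ (A k)).toReal * m := by
      rw [integral_finset_sum _ fun k _ => hintInd k]
      exact Finset.sum_congr rfl fun k _ => key k
    have hae : ∀ᵐ ω ∂μ, ∑ k ∈ Finset.range N, Set.indicator (A k) (X k) ω ≤ C := by
      have hall : ∀ᵐ ω ∂μ, ∀ i, X i ω ≤ C := ae_all_iff.mpr hbdd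
      filter_upwards [hall] with ω hω
      have := aux_sum_le (fun i => X i ω) C (le_of_lt hC) hω N
      refine le_trans (le_of_eq (Finset.sum_congr rfl fun k _ => ?_)) this
      by_cases hk : ∀ j, 1 ≤ j → j ≤ k → ∑ i ∈ Finset.range j, X i ω ≤ 0
      · rw [Set.indicator_of_mem (show ω ∈ A k from hk), if_pos hk]
      · rw [Set.indicator_of_notMem (show ω ∉ A k from hk), if_neg hk]
    have hle : ∫ ω, ∑ k ∈ Finset.range N, Set.indicator (A k) (X k) ω ∂μ ≤ C := by
      have := integral_mono_ae (integrable_finset_sum _ fun k _ => hintInd k)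
        (integrable_const C) hae
      simpa using this
    rw [hsum] at hle
    calc (∑ k ∈ Finset.range N, (μ (A k)).toReal) * m
        = ∑ k ∈ Finset.range N, (μ (A k)).toReal * m := by rw [Finset.sum_mul]
      _ ≤ C := hle
  -- conclude
  have hbound' : ∀ N : ℕ, ∑ k ∈ Finset.range N, μ (A k) ≤ ENNReal.ofReal (C / m) := by
    intro N
    have h1 : ∑ k ∈ Finset.range N, (μ (A k)).toReal ≤ C / m :=
      (le_div_iff₀ hpos).mpr (hbound N)
    calc ∑ k ∈ Finset.range N, μ (A k)
        = ENNReal.ofReal (∑ k ∈ Finset.range N, (μ (A k)).toReal) := by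
          rw [ENNReal.ofReal_sum_of_nonneg fun k _ => ENNReal.toReal_nonneg]
          exact Finset.sum_congr rfl fun k _ =>
            (ENNReal.ofReal_toReal (measure_ne_top μ (A k))).symm
      _ ≤ ENNReal.ofReal (C / m) := ENNReal.ofReal_le_ofReal h1
  show (∑' n : ℕ, μ (A n)) < ⊤
  refine lt_of_le_of_lt ?_ (ENNReal.ofReal_lt_top : ENNReal.ofReal (C / m) < ⊤)
  rw [ENNReal.tsum_eq_iSup_sum]
  refine iSup_le fun s => ?_
  obtain ⟨N, hN⟩ := s.exists_nat_subset_range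
  exact le_trans (Finset.sum_le_sum_of_subset hN) (hbound' N)
end
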